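/- Composition property of the CDT: Let I₁ : Y → ℝ be a probability density with CDF J₁ and transport map f₁ with respect to reference density I₀ on X. Let g : Z → Y be an invertible differentiable strictly increasing function and define the density I_g on Z by its CDF J_g(x) = J₁(g(x)). Then the transport map of I_g is f_g = g⁻¹ ∘ f₁, and the CDT of I_g satisfies Î_g(x) = (g⁻¹(Î₁(x)/√(I₀(x)) + x) − x)·√(I₀(x)). -/

import Mathlib

/-! A positive integrable density has a strictly increasing, hence injective, CDF `J₁`. Since
`J₁ (g (f_g x)) = J_g (f_g x) = J₀ x = J₁ (f₁ x)`, this forces `g ∘ f_g = f₁`, and applying `g⁻¹`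
gives `f_g = g⁻¹ ∘ f₁`; the CDT formula then follows because `√(I₀ x) ≠ 0`. -/

open MeasureTheory Set

theorem strictMono_integral_Iic_of_pos {f : ℝ → ℝ} (hpos : ∀ y, 0 < f y) (hint : Integrable f) :
    StrictMono fun t => ∫ τ in Iic t, f τ := by
  intro a b hab
  have hsub : (∫ τ in Iic b, f τ) - ∫ τ in Iic a, f τ = ∫ τ in a..b, f τ :=
    intervalIntegral.integral_Iic_sub_Iic hint.integrableOn hint.integrableOn
  have hpos_ab : 0 < ∫ τ in a..b, f τ :=
    intervalIntegral.intervalIntegral_pos_of_pos_on hint.intervalIntegrable (fun x _ => hpos x) hab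
  exact sub_pos.mp (hsub ▸ hpos_ab)

theorem cdt_composition_general
    (X Z : Set ℝ)
    (I₀ I₁ Ig : ℝ → ℝ) (g gInv : ℝ → ℝ)
    (hI₀pos : ∀ x ∈ X, 0 < I₀ x)
    (hI₁pos : ∀ y : ℝ, 0 < I₁ y) (hI₁int : Integrable I₁)
    (hgInv : ∀ z ∈ Z, gInv (g z) = z)
    -- the density `I_g` on `Z` has CDF `J_g(x) = J₁(g x)`:
    (hIg : ∀ z ∈ Z, ∫ τ in Iic z, Ig τ = ∫ τ in Iic (g z), I₁ τ)
    (f₁ fg : ℝ → ℝ)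
    (hfgmaps : MapsTo fg X Z)
    -- transport maps: `J₀(x) = J₁(f₁ x)` and `J₀(x) = J_g(f_g x)`:
    (hf₁ : ∀ x ∈ X, ∫ τ in Iic (f₁ x), I₁ τ = ∫ τ in sInf X..x, I₀ τ)
    (hfg : ∀ x ∈ X, ∫ τ in Iic (fg x), Ig τ = ∫ τ in sInf X..x, I₀ τ) :
    ∀ x ∈ X,
      fg x = gInv (f₁ x) ∧
      (fg x - x) * Real.sqrt (I₀ x)
        = (gInv (((f₁ x - x) * Real.sqrt (I₀ x)) / Real.sqrt (I₀ x) + x) - x)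
            * Real.sqrt (I₀ x) := by
  intro x hx
  have hg_fg : g (fg x) = f₁ x := (strictMono_integral_Iic_of_pos hI₁pos hI₁int).injective <| by
    simp only [← hIg (fg x) (hfgmaps hx), hfg x hx, hf₁ x hx]
  have hfg_eq : fg x = gInv (f₁ x) := by rw [← hg_fg, hgInv _ (hfgmaps hx)]
  have hsqrt : Real.sqrt (I₀ x) ≠ 0 := (Real.sqrt_pos.mpr (hI₀pos x hx)).ne'
  refine ⟨hfg_eq, ?_⟩
  rw [mul_div_cancel_right₀ _ hsqrt, sub_add_cancel, hfg_eq]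

/-- Composition property of the CDT: if `J_g = J₁ ∘ g` for an invertible,
differentiable, strictly increasing `g : Z → Y`, then the transport map of `I_g` is
`g⁻¹ ∘ f₁` and `Î_g(x) = (g⁻¹(Î₁(x)/√(I₀ x) + x) − x)·√(I₀ x)`. -/
theorem cdt_composition
    (X Y Z : Set ℝ) (hX : X.OrdConnected) (hY : Y.OrdConnected) (hZ : Z.OrdConnected)
    (I₀ I₁ Ig : ℝ → ℝ) (g gInv : ℝ → ℝ)
    (hI₀pos : ∀ x ∈ X, 0 < I₀ x)
    (hI₁pos : ∀ y : ℝ, 0 < I₁ y) (hI₁int : Integrable I₁)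
    (hgmono : StrictMonoOn g Z) (hgbij : BijOn g Z Y)
    (hgdiff : ∀ z ∈ Z, DifferentiableAt ℝ g z)
    (hgInv : ∀ z ∈ Z, gInv (g z) = z)
    (hgInv' : ∀ y ∈ Y, g (gInv y) = y)
    -- the density `I_g` on `Z` has CDF `J_g(x) = J₁(g x)`:
    (hIg : ∀ z ∈ Z, ∫ τ in Iic z, Ig τ = ∫ τ in Iic (g z), I₁ τ)
    (f₁ fg : ℝ → ℝ)
    (hf₁maps : MapsTo f₁ X Y) (hfgmaps : MapsTo fg X Z)
    -- transport maps: `J₀(x) = J₁(f₁ x)` and `J₀(x) = J_g(f_g x)`: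
    (hf₁ : ∀ x ∈ X, ∫ τ in Iic (f₁ x), I₁ τ = ∫ τ in sInf X..x, I₀ τ)
    (hfg : ∀ x ∈ X, ∫ τ in Iic (fg x), Ig τ = ∫ τ in sInf X..x, I₀ τ) :
    ∀ x ∈ X,
      fg x = gInv (f₁ x) ∧
      (fg x - x) * Real.sqrt (I₀ x)
        = (gInv (((f₁ x - x) * Real.sqrt (I₀ x)) / Real.sqrt (I₀ x) + x) - x)
            * Real.sqrt (I₀ x) :=
  cdt_composition_general X Z I₀ I₁ Ig g gInv hI₀pos hI₁pos hI₁int hgInv hIg f₁ fg hfgmaps hf₁ hfg
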